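/- Let n ≥ 4 and let r be an integer with 1 ≤ r and 2r + 2 ≤ n. Then in S_n the following relation holds: t_{2r} · t_{2r+2} = v_{2r} · t_{2r+1}^{-1} · u_{2r+2}. -/

import Mathlib

/- We work in the symmetric group on `Fin n` (representing `{1, ..., n}` via `i ↦ i - 1`).
The paper multiplies permutations left-to-right: `(π₁ · π₂)(i) = π₂(π₁(i))`,
while Mathlib's `*` on `Equiv.Perm` is function composition: `(π₁ * π₂)(i) = π₁(π₂(i))`.
Hence a paper product `A · B · C` is rendered below as `C * B * A`. -/

/-- `sP n i` is the transposition `sᵢ = (i, i+1)` (1-indexed), for `1 ≤ i ≤ n - 1`. -/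
def sP (n i : ℕ) : Equiv.Perm (Fin n) :=
  if h : 1 ≤ i ∧ i < n then
    Equiv.swap ⟨i - 1, lt_of_le_of_lt (Nat.sub_le i 1) h.2⟩ ⟨i, h.2⟩
  else 1

/-- `tP n m` is `t_m = s₁ · s₂ ⋯ s_{m-1}` (paper's left-to-right product, so here the
factor for larger index is multiplied on the left).  `tP n 0 = tP n 1 = 1`. -/
def tP (n m : ℕ) : Equiv.Perm (Fin n) :=
  (List.range (m - 1)).foldl (fun g j => sP n (j + 1) * g) 1

/-- `uP n r` is `u_{2r} = t_{2r-2} · s_{2r-1}` (paper order; here reversed). -/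
def uP (n r : ℕ) : Equiv.Perm (Fin n) := sP n (2 * r - 1) * tP n (2 * r - 2)

/-- `vP n r` is `v_{2r} = t_{2r}²`. -/
def vP (n r : ℕ) : Equiv.Perm (Fin n) := (tP n (2 * r)) ^ 2

/-! In the paper's left-to-right order, `t_{m+1} = t_m · s_m`, so `t_{2r+1} = t_{2r} · s_{2r}`
and `t_{2r+2} = t_{2r} · s_{2r} · s_{2r+1}`, while `u_{2r+2} = t_{2r} · s_{2r+1}`. Since `s_{2r}`
is an involution, both sides of the relation reduce to `t_{2r}² · s_{2r} · s_{2r+1}`. -/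

lemma sP_inv (n i : ℕ) : (sP n i)⁻¹ = sP n i := by
  unfold sP; split <;> simp

lemma tP_succ (n m : ℕ) : tP n (m + 1) = sP n m * tP n m := by
  cases m with
  | zero => simp [tP, sP]
  | succ k =>
    show (List.range (k + 1)).foldl _ 1 = _
    rw [List.range_succ, List.foldl_append]
    rfl

lemma tP_add_two (n m : ℕ) : tP n (m + 2) = sP n (m + 1) * (sP n m * tP n m) := by
  rw [tP_succ n (m + 1), tP_succ]

lemma uP_succ (n r : ℕ) : uP n (r + 1) = sP n (2 * r + 1) * tP n (2 * r) := by
  rw [uP, show 2 * (r + 1) - 1 = 2 * r + 1 by omega, show 2 * (r + 1) - 2 = 2 * r by omega]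

theorem rel_t_v_u_general (n r : ℕ) :
    tP n (2 * r + 2) * tP n (2 * r) =
      uP n (r + 1) * (tP n (2 * r + 1))⁻¹ * vP n r := by
  rw [uP_succ, vP, tP_add_two, tP_succ, mul_inv_rev, sP_inv, pow_two]
  group

/-- `t_{2r} · t_{2r+2} = v_{2r} · t_{2r+1}⁻¹ · u_{2r+2}` (paper order;
rendered here in composition order, i.e. reversed).  Here `uP n (r+1) = u_{2r+2}` and
`vP n r = v_{2r}`. -/
theorem rel_t_v_u (n r : ℕ) (hn : 4 ≤ n) (hr : 1 ≤ r) (hrn : 2 * r + 2 ≤ n) :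
    tP n (2 * r + 2) * tP n (2 * r) =
      uP n (r + 1) * (tP n (2 * r + 1))⁻¹ * vP n r :=
  rel_t_v_u_general n r
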